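/- The density f(x) = (3/(2√(2π))) exp(-x²/2)(1 - erf(x/√2)²) of the median of three i.i.d. standard normals is not equal to any normal density; in particular its fourth moment differs from 3·(1-√3/π)², so the median is not normally distributed. -/

import Mathlib

open Real MeasureTheory

noncomputable def erf (x : ℝ) : ℝ := 2 / Real.sqrt π * ∫ s in (0:ℝ)..x, Real.exp (-s^2)

noncomputable def f (x : ℝ) : ℝ :=
  (3 / (2 * Real.sqrt (2*π))) * Real.exp (-x^2/2) * (1 - erf (x / Real.sqrt 2)^2)

/-!
Evaluating at `0` forces `σ = 2/3`, after which `f` equal to the normal density would mean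
`1 - erf(t)² = exp(-5t²/4)` for all `t = x/√2`. But `erf t ≥ (2/√π) t e^{-t²}` gives
`erf(t)² ≈ (4/π) t²` with `4/π > 5/4`, so the left side is the smaller one for small `t > 0`.

The fourth moment is computed exactly from an explicit odd primitive `G` of `x⁴ f`:
`∫ x⁴ f = 2 G(+∞) = 3 - 13√3/(3π)`, which is not `3(1 - √3/π)²` because `√3 π ≠ 27/5`.
-/

open Filter Topology

namespace MedianNotNormal

lemma hasDerivAt_erf (x : ℝ) : HasDerivAt erf (2 / √π * exp (-x ^ 2)) x :=
  ((by fun_prop : Continuous fun s : ℝ => exp (-s ^ 2)).integral_hasStrictDerivAt 0 x).hasDerivAt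
    |>.const_mul _

lemma hasDerivAt_erf_mul (a x : ℝ) :
    HasDerivAt (fun x => erf (a * x)) (2 / √π * a * exp (-(a * x) ^ 2)) x :=
  ((hasDerivAt_erf (a * x)).comp x ((hasDerivAt_id x).const_mul a)).congr_deriv (by ring)

lemma erf_zero : erf 0 = 0 := by simp [erf]

lemma erf_neg (x : ℝ) : erf (-x) = -erf x := by
  have h := intervalIntegral.integral_comp_neg (a := 0) (b := x) fun s => exp (-s ^ 2)
  simp only [neg_sq, neg_zero] at h
  rw [erf, erf, intervalIntegral.integral_symm (-x) 0, ← h]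
  ring

lemma monotone_erf : Monotone erf :=
  monotone_of_hasDerivAt_nonneg hasDerivAt_erf fun x => by positivity

lemma tendsto_erf_atTop : Tendsto erf atTop (𝓝 1) := by
  have h := (intervalIntegral_tendsto_integral_Ioi 0
    (integrable_exp_neg_mul_sq one_pos).integrableOn tendsto_id).const_mul (2 / √π)
  rw [integral_gaussian_Ioi, div_one] at h
  simp only [neg_mul, one_mul] at h
  rwa [div_mul_div_cancel₀ (by positivity), div_self two_ne_zero] at h

lemma erf_sq_le_one (x : ℝ) : erf x ^ 2 ≤ 1 := by
  have hle (y : ℝ) : erf y ≤ 1 := monotone_erf.ge_of_tendsto tendsto_erf_atTop y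
  rw [sq_le_one_iff_abs_le_one, abs_le]
  exact ⟨by linarith [hle (-x), erf_neg x], hle x⟩

lemma mul_exp_neg_sq_le_erf {t : ℝ} (ht : 0 ≤ t) : 2 / √π * (t * exp (-t ^ 2)) ≤ erf t := by
  have h : ∫ _ in (0 : ℝ)..t, exp (-t ^ 2) ≤ ∫ s in (0 : ℝ)..t, exp (-s ^ 2) :=
    intervalIntegral.integral_mono_on ht intervalIntegrable_const
      ((by fun_prop : Continuous fun s : ℝ => exp (-s ^ 2)).intervalIntegrable _ _)
      fun s hs => exp_le_exp.2 (by nlinarith [hs.1, hs.2])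
  rw [intervalIntegral.integral_const, smul_eq_mul, sub_zero] at h
  exact mul_le_mul_of_nonneg_left h (by positivity)

noncomputable def phi (x : ℝ) : ℝ := (√(2 * π))⁻¹ * exp (-x ^ 2 / 2)

/-- `E = 2Φ - 1`, where `Φ` is the standard normal distribution function. -/
noncomputable def E (x : ℝ) : ℝ := erf (x / √2)

lemma phi_pos (x : ℝ) : 0 < phi x := by unfold phi; positivity

lemma phi_neg (x : ℝ) : phi (-x) = phi x := by simp [phi]

lemma E_neg (x : ℝ) : E (-x) = -E x := by simp [E, neg_div, erf_neg]

lemma f_eq (x : ℝ) : f x = 3 / 2 * phi x * (1 - E x ^ 2) := by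
  simp only [f, phi, E]
  ring

lemma hasDerivAt_phi (x : ℝ) : HasDerivAt phi (-x * phi x) x := by
  have h : HasDerivAt (fun y : ℝ => -y ^ 2 / 2) (-x) x :=
    ((hasDerivAt_pow 2 x).fun_neg.div_const 2).congr_deriv (by norm_num; ring)
  exact (h.exp.const_mul _).congr_deriv (by simp only [phi]; ring)

lemma hasDerivAt_E (x : ℝ) : HasDerivAt E (2 * phi x) x := by
  have h := hasDerivAt_erf_mul (√2)⁻¹ x
  simp only [inv_mul_eq_div] at h
  refine h.congr_deriv ?_
  rw [phi, div_pow, sq_sqrt zero_le_two, sqrt_mul zero_le_two]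
  field_simp

lemma continuous_E : Continuous E :=
  continuous_iff_continuousAt.2 fun x => (hasDerivAt_E x).continuousAt

lemma hasDerivAt_erf_sqrt_three_halves_mul (x : ℝ) :
    HasDerivAt (fun x => erf (√(3 / 2) * x)) (4 * √3 * π * phi x ^ 3) x := by
  refine (hasDerivAt_erf_mul _ x).congr_deriv ?_
  rw [phi, mul_pow, sq_sqrt (by positivity), mul_pow, inv_pow, ← exp_nat_mul, sqrt_mul zero_le_two,
    sqrt_div' _ zero_le_two]
  field_simp
  rw [sq_sqrt pi_pos.le, sq_sqrt zero_le_two]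
  push_cast
  ring_nf

lemma one_sub_erf_sq_lt_exp {t : ℝ} (ht : 0 < t) (ht' : t ^ 2 ≤ 1 / 200) :
    1 - erf t ^ 2 < exp (-(5 / 4 * t ^ 2)) := by
  have hπ := pi_lt_d2
  have hlow : 4 / π * t ^ 2 * (1 - 2 * t ^ 2) ≤ erf t ^ 2 :=
    calc 4 / π * t ^ 2 * (1 - 2 * t ^ 2) ≤ 4 / π * t ^ 2 * exp (-t ^ 2) ^ 2 := by
          rw [← exp_nat_mul]
          gcongr
          push_cast
          linarith [add_one_le_exp (2 * -t ^ 2)]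
      _ = (2 / √π * (t * exp (-t ^ 2))) ^ 2 := by
          rw [mul_pow, mul_pow, div_pow, sq_sqrt pi_pos.le]; ring
      _ ≤ erf t ^ 2 := pow_le_pow_left₀ (by positivity) (mul_exp_neg_sq_le_erf ht.le) 2
  have hgap : 5 / 4 * t ^ 2 < 4 / π * t ^ 2 * (1 - 2 * t ^ 2) := by
    have : 5 / 4 * π < 4 * (1 - 2 * t ^ 2) := by linarith
    calc 5 / 4 * t ^ 2 = 5 / 4 * π * t ^ 2 / π := by field_simp
      _ < 4 * (1 - 2 * t ^ 2) * t ^ 2 / π := by gcongr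
      _ = 4 / π * t ^ 2 * (1 - 2 * t ^ 2) := by ring
  linarith [add_one_le_exp (-(5 / 4 * t ^ 2))]

lemma f_ne_normal_density {σ : ℝ} (hσ : 0 < σ) :
    f ≠ fun x => 1 / (σ * √(2 * π)) * exp (-x ^ 2 / (2 * σ ^ 2)) := by
  intro h
  obtain rfl : σ = 2 / 3 := by
    have h0 := congrFun h 0
    norm_num [f_eq, phi, E, erf_zero] at h0
    field_simp at h0
    linarith
  set t : ℝ := 1 / 10 / √2
  have ht : t ^ 2 = 1 / 200 := by
    rw [div_pow, sq_sqrt zero_le_two]; norm_num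
  have hdens : 1 / (2 / 3 * √(2 * π)) * exp (-(1 / 10) ^ 2 / (2 * (2 / 3) ^ 2))
      = 3 / 2 * phi (1 / 10) * exp (-(5 / 4 * t ^ 2)) := by
    rw [phi, ht, mul_assoc, mul_assoc, ← exp_add]
    field_simp
    norm_num
  have heq : 1 - erf t ^ 2 = exp (-(5 / 4 * t ^ 2)) :=
    mul_left_cancel₀ (by have := phi_pos (1 / 10); positivity)
      (((f_eq _).symm.trans (congrFun h _)).trans hdens)
  exact (one_sub_erf_sq_lt_exp (by positivity) ht.le).ne heq

/- `G₁`, `G₂`, `G₃` are primitives of `x⁴ φ`, `(x³ + 3x) φ²` and `(x² + 4) φ³`. Integrating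
`x⁴ φ (1 - E²)` by parts against `G₁`, using `E' = 2φ`, leaves `E³` and `(x³ + 3x) φ² E`;
integrating the latter by parts against `G₂` leaves `(x² + 4) φ³`. -/
noncomputable def G₁ (x : ℝ) : ℝ := -(x ^ 3 + 3 * x) * phi x + 3 / 2 * E x

noncomputable def G₂ (x : ℝ) : ℝ := -(x ^ 2 / 2 + 2) * phi x ^ 2

noncomputable def G₃ (x : ℝ) : ℝ :=
  -(x / 3) * phi x ^ 3 + 13 * √3 / (36 * π) * erf (√(3 / 2) * x)

noncomputable def G (x : ℝ) : ℝ :=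
  3 / 2 * ((1 - E x ^ 2) * G₁ x + E x ^ 3 - 4 * E x * G₂ x - 4 * G₃ x)

lemma hasDerivAt_G₁ (x : ℝ) : HasDerivAt G₁ (x ^ 4 * phi x) x := by
  have h := (((hasDerivAt_pow 3 x).add ((hasDerivAt_id x).const_mul 3)).fun_neg.mul
    (hasDerivAt_phi x)).add ((hasDerivAt_E x).const_mul (3 / 2))
  exact h.congr_deriv (by simp only [Pi.add_apply, id]; ring)

lemma hasDerivAt_G₂ (x : ℝ) : HasDerivAt G₂ ((x ^ 3 + 3 * x) * phi x ^ 2) x := by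
  have h := ((hasDerivAt_pow 2 x).div_const 2 |>.add_const 2).fun_neg.mul
    ((hasDerivAt_phi x).pow 2)
  exact h.congr_deriv (by rw [Pi.pow_apply]; ring)

lemma hasDerivAt_G₃ (x : ℝ) : HasDerivAt G₃ ((x ^ 2 + 4) * phi x ^ 3) x := by
  have h := (((hasDerivAt_id x).div_const 3).fun_neg.mul ((hasDerivAt_phi x).pow 3)).add
    ((hasDerivAt_erf_sqrt_three_halves_mul x).const_mul (13 * √3 / (36 * π)))
  refine h.congr_deriv ?_
  have h3 : √3 ^ 2 = 3 := sq_sqrt (by norm_num)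
  simp only [Pi.pow_apply, id]
  field_simp
  rw [h3]
  ring

lemma hasDerivAt_G (x : ℝ) : HasDerivAt G (x ^ 4 * f x) x := by
  have hE := hasDerivAt_E x
  have h := (((((hE.pow 2).const_sub 1).mul (hasDerivAt_G₁ x)).add (hE.pow 3)).sub
    ((hE.const_mul 4).mul (hasDerivAt_G₂ x))).sub ((hasDerivAt_G₃ x).const_mul 4)
    |>.const_mul (3 / 2)
  refine h.congr_deriv ?_
  rw [f_eq, G₁, G₂, Pi.pow_apply]
  ring

lemma tendsto_pow_mul_phi_pow_atTop (n : ℕ) {k : ℕ} (hk : k ≠ 0) :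
    Tendsto (fun x => x ^ n * phi x ^ k) atTop (𝓝 0) := by
  have hdecay := (rpow_mul_exp_neg_mul_sq_isLittleO_exp_neg (b := k / 2) (by positivity) n).isBigO
    |>.trans_tendsto (tendsto_exp_atBot.comp ((tendsto_const_mul_atBot_of_neg (by norm_num)).2
      tendsto_id))
  rw [← mul_zero ((√(2 * π))⁻¹ ^ k)]
  refine (hdecay.const_mul _).congr' ?_
  filter_upwards [eventually_gt_atTop 0] with x hx
  rw [rpow_natCast, phi, mul_pow, ← exp_nat_mul]
  ring_nf

lemma tendsto_E_atTop : Tendsto E atTop (𝓝 1) :=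
  tendsto_erf_atTop.comp (tendsto_id.atTop_div_const (by positivity))

lemma tendsto_G₁_atTop : Tendsto G₁ atTop (𝓝 (3 / 2)) := by
  have h := (((tendsto_pow_mul_phi_pow_atTop 3 one_ne_zero).add
    ((tendsto_pow_mul_phi_pow_atTop 1 one_ne_zero).const_mul 3)).neg).add
    (tendsto_E_atTop.const_mul (3 / 2))
  rw [mul_zero, add_zero, neg_zero, zero_add, mul_one] at h
  exact h.congr fun x => by simp only [G₁]; ring

lemma tendsto_G₂_atTop : Tendsto G₂ atTop (𝓝 0) := by
  have h := (((tendsto_pow_mul_phi_pow_atTop 2 two_ne_zero).div_const 2).add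
    ((tendsto_pow_mul_phi_pow_atTop 0 two_ne_zero).const_mul 2)).neg
  rw [zero_div, mul_zero, add_zero, neg_zero] at h
  exact h.congr fun x => by simp only [G₂]; ring

lemma tendsto_G₃_atTop : Tendsto G₃ atTop (𝓝 (13 * √3 / (36 * π))) := by
  have h := ((tendsto_pow_mul_phi_pow_atTop 1 three_ne_zero).div_const 3).neg.add
    ((tendsto_erf_atTop.comp (tendsto_id.const_mul_atTop (by positivity : 0 < √(3 / 2))))
      |>.const_mul (13 * √3 / (36 * π)))
  rw [zero_div, neg_zero, zero_add, mul_one] at h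
  exact h.congr fun x => by simp only [G₃, Function.comp, id]; ring

lemma tendsto_G_atTop : Tendsto G atTop (𝓝 (3 / 2 - 13 * √3 / (6 * π))) := by
  have hE := tendsto_E_atTop
  have h := (((((hE.pow 2).const_sub 1).mul tendsto_G₁_atTop).add (hE.pow 3)).sub
    ((hE.const_mul 4).mul tendsto_G₂_atTop)).sub (tendsto_G₃_atTop.const_mul 4)
    |>.const_mul (3 / 2)
  convert h using 2
  · rfl
  · ring

lemma G_neg (x : ℝ) : G (-x) = -G x := by
  simp only [G, G₁, G₂, G₃, E_neg, phi_neg, mul_neg, erf_neg]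
  ring

lemma tendsto_G_atBot : Tendsto G atBot (𝓝 (-(3 / 2 - 13 * √3 / (6 * π)))) :=
  (tendsto_G_atTop.comp tendsto_neg_atBot_atTop).neg.congr fun x => by
    simp only [Function.comp, G_neg, neg_neg]

lemma integrable_pow_four_mul_phi : Integrable fun x => x ^ 4 * phi x := by
  have h := (integrable_rpow_mul_exp_neg_mul_sq (b := 1 / 2) (by norm_num) (s := 4)
    (by norm_num)).const_mul (√(2 * π))⁻¹
  refine h.congr (ae_of_all _ fun x => ?_)
  simp only [phi]
  rw [show (4 : ℝ) = (4 : ℕ) by norm_num, rpow_natCast]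
  ring_nf

lemma integrable_pow_four_mul_f : Integrable fun x => x ^ 4 * f x := by
  refine (integrable_pow_four_mul_phi.const_mul (3 / 2)).mono'
    (Continuous.aestronglyMeasurable ?_) (ae_of_all _ fun x => ?_)
  · simp only [f_eq, phi]
    have := continuous_E
    fun_prop
  · have hE : 0 ≤ 1 - E x ^ 2 := sub_nonneg.2 (erf_sq_le_one _)
    have hE' : 1 - E x ^ 2 ≤ 1 := sub_le_self _ (sq_nonneg _)
    have hφ := phi_pos x
    rw [f_eq, norm_of_nonneg (by positivity)]
    calc x ^ 4 * (3 / 2 * phi x * (1 - E x ^ 2)) ≤ x ^ 4 * (3 / 2 * phi x * 1) := by gcongr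
      _ = 3 / 2 * (x ^ 4 * phi x) := by ring

lemma integral_pow_four_mul_f : ∫ x, x ^ 4 * f x = 3 - 13 * √3 / (3 * π) := by
  rw [integral_of_hasDerivAt_of_tendsto hasDerivAt_G integrable_pow_four_mul_f tendsto_G_atBot
    tendsto_G_atTop]
  ring

lemma integral_pow_four_mul_f_ne : ∫ x, x ^ 4 * f x ≠ 3 * (1 - √3 / π) ^ 2 := by
  have h3 : √3 ^ 2 = 3 := sq_sqrt (by norm_num)
  have h3lb : 1.73 < √3 := by
    rw [lt_sqrt (by norm_num)]; norm_num
  have hπ := pi_gt_d2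
  rw [integral_pow_four_mul_f]
  intro h
  field_simp at h
  nlinarith [mul_lt_mul'' h3lb hπ (by norm_num) (by norm_num)]

end MedianNotNormal

theorem median_not_normal :
    (∀ σ : ℝ, 0 < σ →
      f ≠ fun x => (1 / (σ * Real.sqrt (2*π))) * Real.exp (-x^2 / (2*σ^2)))
    ∧ (∫ x : ℝ, x^4 * f x) ≠ 3 * (1 - Real.sqrt 3 / π)^2 :=
  ⟨fun _ hσ => MedianNotNormal.f_ne_normal_density hσ,
    MedianNotNormal.integral_pow_four_mul_f_ne⟩
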